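/- Let a < b be real numbers and 0 < sigma < 1. If w : [a,b] → ℝ is absolutely continuous with derivative w' in L^1(a,b) and w(b) = 0, then differentiation commutes with the right fractional integral: for almost every x in (a,b), the function y ↦ (I_{b-}^sigma w)(y) is differentiable at x with derivative equal to (I_{b-}^sigma w')(x). -/

import Mathlib

/-!
Since `w b = 0`, absolute continuity gives `w s = -∫ t in s..b, w' t`. Exchanging the order of
integration over the triangle `y < u < t < b` (legitimate because the kernels `(u - y) ^ (σ - 1)`
and `(t - u) ^ (σ - 1)` have `u`-integrals bounded by `(b - y) ^ σ / σ`) turns both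
`∫ s in y..b, (s - y) ^ (σ - 1) * w s` and `-∫ u in y..b, ∫ t in u..b, (t - u) ^ (σ - 1) * w' t`
into `-∫ t in y..b, (t - y) ^ σ / σ * w' t`. Hence `Ir b σ w y = -∫ u in y..b, Ir b σ w' u` with
`Ir b σ w'` integrable, and the Lebesgue differentiation theorem concludes.
-/

open MeasureTheory Real Set

/-- Right Riemann–Liouville fractional integral of order `σ` with base point `b`. -/
noncomputable def Ir (b σ : ℝ) (w : ℝ → ℝ) (x : ℝ) : ℝ :=
  (1 / Real.Gamma σ) * ∫ s in x..b, (s - x) ^ (σ - 1) * w s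

open Filter Function

lemma eq_neg_integral_of_eq_add_integral {a b : ℝ} {w w' : ℝ → ℝ}
    (hw' : IntervalIntegrable w' volume a b) (hw : ∀ x ∈ Icc a b, w x = w a + ∫ s in a..x, w' s)
    (hwb : w b = 0) {x : ℝ} (hx : x ∈ Icc a b) : w x = -∫ t in x..b, w' t := by
  have hx' : x ∈ uIcc a b := Icc_subset_uIcc hx
  have hsplit := intervalIntegral.integral_add_adjacent_intervals
    (hw'.mono_set (uIcc_subset_uIcc_left hx')) (hw'.mono_set (uIcc_subset_uIcc_right hx'))
  have hb := hw b (right_mem_Icc.2 (hx.1.trans hx.2))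
  rw [hw x hx]
  linarith

lemma Iio_inter_Ioc_of_le {α : Type*} [LinearOrder α] {y t b : α} (htb : t ≤ b) :
    Iio t ∩ Ioc y b = Ioo y t := by
  ext u; simp only [mem_inter_iff, mem_Iio, mem_Ioc, mem_Ioo]; grind

noncomputable def triangleIntegrand (κ : ℝ → ℝ → ℝ) (g : ℝ → ℝ) : ℝ × ℝ → ℝ :=
  {p : ℝ × ℝ | p.1 < p.2}.indicator fun p => κ p.1 p.2 * g p.2

section TriangleFubini

variable {κ : ℝ → ℝ → ℝ} {g : ℝ → ℝ} {y b : ℝ}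

lemma triangleIntegrand_left (κ : ℝ → ℝ → ℝ) (g : ℝ → ℝ) (u : ℝ) :
    (fun t => triangleIntegrand κ g (u, t)) = (Ioi u).indicator fun t => κ u t * g t := by
  ext t; simp [triangleIntegrand, indicator_apply]

lemma triangleIntegrand_right (κ : ℝ → ℝ → ℝ) (g : ℝ → ℝ) (t : ℝ) :
    (fun u => triangleIntegrand κ g (u, t)) = (Iio t).indicator fun u => κ u t * g t := by
  ext u; simp [triangleIntegrand, indicator_apply]

lemma integral_triangleIntegrand_left {u : ℝ} (hu : u ∈ Ioc y b) :
    ∫ t, triangleIntegrand κ g (u, t) ∂volume.restrict (Ioc y b) = ∫ t in u..b, κ u t * g t := by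
  have hIoc : Ioi u ∩ Ioc y b = Ioc u b := by
    rw [inter_comm, Ioc_inter_Ioi, sup_eq_right.2 hu.1.le]
  rw [triangleIntegrand_left, integral_indicator measurableSet_Ioi,
    Measure.restrict_restrict measurableSet_Ioi, hIoc, intervalIntegral.integral_of_le hu.2]

lemma integral_triangleIntegrand_right {t : ℝ} (ht : t ∈ Ioc y b) :
    ∫ u, triangleIntegrand κ g (u, t) ∂volume.restrict (Ioc y b) = (∫ u in y..t, κ u t) * g t := by
  rw [triangleIntegrand_right, integral_indicator measurableSet_Iio,
    Measure.restrict_restrict measurableSet_Iio, Iio_inter_Ioc_of_le ht.2, integral_mul_const,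
    intervalIntegral.integral_of_le ht.1.le, integral_Ioc_eq_integral_Ioo]

lemma norm_triangleIntegrand (hκ_nonneg : ∀ u t, y < u → u < t → 0 ≤ κ u t) {u : ℝ}
    (hu : y < u) (t : ℝ) :
    ‖triangleIntegrand κ g (u, t)‖ = triangleIntegrand κ (‖g ·‖) (u, t) := by
  by_cases hut : u < t
  · simp [triangleIntegrand, hut, abs_of_nonneg (hκ_nonneg u t hu hut)]
  · simp [triangleIntegrand, hut]

lemma integrable_triangleIntegrand (hκ : Measurable (uncurry κ))
    (hκ_nonneg : ∀ u t, y < u → u < t → 0 ≤ κ u t)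
    (hκ_int : ∀ t ∈ Ioc y b, IntervalIntegrable (κ · t) volume y t)
    {C : ℝ} (hκ_bound : ∀ t ∈ Ioc y b, ∫ u in y..t, κ u t ≤ C)
    (hg : IntegrableOn g (Ioc y b)) :
    Integrable (triangleIntegrand κ g)
      ((volume.restrict (Ioc y b)).prod (volume.restrict (Ioc y b))) := by
  have hmeas : AEStronglyMeasurable (triangleIntegrand κ g)
      ((volume.restrict (Ioc y b)).prod (volume.restrict (Ioc y b))) :=
    (hκ.aestronglyMeasurable.mul hg.aestronglyMeasurable.comp_snd).indicator
      (measurableSet_lt measurable_fst measurable_snd)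
  refine (integrable_prod_iff' hmeas).2 ⟨?_, ?_⟩
  · filter_upwards [ae_restrict_mem measurableSet_Ioc] with t ht
    rw [triangleIntegrand_right, integrable_indicator_iff measurableSet_Iio, IntegrableOn,
      Measure.restrict_restrict measurableSet_Iio, Iio_inter_Ioc_of_le ht.2]
    exact (((hκ_int t ht).1.mono_set Ioo_subset_Ioc_self).mul_const (g t))
  · refine (hg.norm.const_mul C).mono' hmeas.prod_swap.norm.integral_prod_right' ?_
    filter_upwards [ae_restrict_mem measurableSet_Ioc] with t ht
    have hnorm : ∫ u, ‖triangleIntegrand κ g (u, t)‖ ∂volume.restrict (Ioc y b)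
        = (∫ u in y..t, κ u t) * ‖g t‖ := by
      rw [← integral_triangleIntegrand_right (g := (‖g ·‖)) ht]
      refine integral_congr_ae ?_
      filter_upwards [ae_restrict_mem measurableSet_Ioc] with u hu
      exact norm_triangleIntegrand hκ_nonneg hu.1 t
    rw [Real.norm_of_nonneg (integral_nonneg fun _ => norm_nonneg _), hnorm]
    exact mul_le_mul_of_nonneg_right (hκ_bound t ht) (norm_nonneg _)

theorem integral_integral_triangle_swap (hyb : y ≤ b) (hκ : Measurable (uncurry κ))
    (hκ_nonneg : ∀ u t, y < u → u < t → 0 ≤ κ u t)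
    (hκ_int : ∀ t ∈ Ioc y b, IntervalIntegrable (κ · t) volume y t)
    {C : ℝ} (hκ_bound : ∀ t ∈ Ioc y b, ∫ u in y..t, κ u t ≤ C)
    (hg : IntegrableOn g (Ioc y b)) :
    ∫ u in y..b, ∫ t in u..b, κ u t * g t = ∫ t in y..b, (∫ u in y..t, κ u t) * g t := by
  rw [intervalIntegral.integral_of_le hyb, intervalIntegral.integral_of_le hyb]
  calc ∫ u in Ioc y b, ∫ t in u..b, κ u t * g t
      = ∫ u in Ioc y b, ∫ t in Ioc y b, triangleIntegrand κ g (u, t) :=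
        setIntegral_congr_fun measurableSet_Ioc fun u hu =>
          (integral_triangleIntegrand_left hu).symm
    _ = ∫ t in Ioc y b, ∫ u in Ioc y b, triangleIntegrand κ g (u, t) :=
        integral_integral_swap
          (integrable_triangleIntegrand hκ hκ_nonneg hκ_int hκ_bound hg)
    _ = ∫ t in Ioc y b, (∫ u in y..t, κ u t) * g t :=
        setIntegral_congr_fun measurableSet_Ioc fun t ht =>
          integral_triangleIntegrand_right ht

theorem intervalIntegrable_integral_triangle (hyb : y ≤ b) (hκ : Measurable (uncurry κ))
    (hκ_nonneg : ∀ u t, y < u → u < t → 0 ≤ κ u t)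
    (hκ_int : ∀ t ∈ Ioc y b, IntervalIntegrable (κ · t) volume y t)
    {C : ℝ} (hκ_bound : ∀ t ∈ Ioc y b, ∫ u in y..t, κ u t ≤ C)
    (hg : IntegrableOn g (Ioc y b)) :
    IntervalIntegrable (fun u => ∫ t in u..b, κ u t * g t) volume y b := by
  refine (intervalIntegrable_iff_integrableOn_Ioc_of_le hyb).2 ?_
  refine (integrable_triangleIntegrand hκ hκ_nonneg hκ_int hκ_bound hg).integral_prod_left.congr ?_
  filter_upwards [ae_restrict_mem measurableSet_Ioc] with u hu
  exact integral_triangleIntegrand_left hu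

end TriangleFubini

section RiemannLiouvilleKernel

variable {σ : ℝ}

lemma integral_rpow_comp_sub_right (hσ : 0 < σ) (y t : ℝ) :
    ∫ u in y..t, (u - y) ^ (σ - 1) = (t - y) ^ σ / σ := by
  rw [intervalIntegral.integral_comp_sub_right (· ^ (σ - 1)), sub_self,
    integral_rpow (Or.inl (by linarith)), sub_add_cancel, zero_rpow hσ.ne', sub_zero]

lemma integral_rpow_comp_sub_left (hσ : 0 < σ) (y t : ℝ) :
    ∫ u in y..t, (t - u) ^ (σ - 1) = (t - y) ^ σ / σ := by
  rw [intervalIntegral.integral_comp_sub_left (· ^ (σ - 1)), sub_self,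
    integral_rpow (Or.inl (by linarith)), sub_add_cancel, zero_rpow hσ.ne', sub_zero]

lemma integral_rpow_comp_sub_right_le (hσ : 0 < σ) {y t b : ℝ} (ht : t ∈ Ioc y b) :
    ∫ u in y..t, (u - y) ^ (σ - 1) ≤ (b - y) ^ σ / σ := by
  rw [integral_rpow_comp_sub_right hσ]
  gcongr <;> linarith [ht.1, ht.2]

lemma integral_rpow_comp_sub_left_le (hσ : 0 < σ) {y t b : ℝ} (ht : t ∈ Ioc y b) :
    ∫ u in y..t, (t - u) ^ (σ - 1) ≤ (b - y) ^ σ / σ := by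
  rw [integral_rpow_comp_sub_left hσ]
  gcongr <;> linarith [ht.1, ht.2]

lemma intervalIntegrable_rpow_comp_sub_right (hσ : 0 < σ) (y t : ℝ) :
    IntervalIntegrable (fun u => (u - y) ^ (σ - 1)) volume y t := by
  simpa using (intervalIntegral.intervalIntegrable_rpow' (r := σ - 1) (by linarith)
    (a := 0) (b := t - y)).comp_sub_right y

lemma intervalIntegrable_rpow_comp_sub_left (hσ : 0 < σ) (y t : ℝ) :
    IntervalIntegrable (fun u => (t - u) ^ (σ - 1)) volume y t := by
  simpa using ((intervalIntegral.intervalIntegrable_rpow' (r := σ - 1) (by linarith)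
    (a := 0) (b := t - y)).comp_sub_left t).symm

variable {y b : ℝ} {w w' : ℝ → ℝ}

lemma integral_rpow_mul_eq_neg_integral (hσ : 0 < σ) (hyb : y ≤ b)
    (hw' : IntegrableOn w' (Ioc y b)) (hw : ∀ s ∈ Ioc y b, w s = -∫ t in s..b, w' t) :
    ∫ s in y..b, (s - y) ^ (σ - 1) * w s = -∫ t in y..b, (t - y) ^ σ / σ * w' t := by
  calc ∫ s in y..b, (s - y) ^ (σ - 1) * w s
      = -∫ s in y..b, ∫ t in s..b, (s - y) ^ (σ - 1) * w' t := by
        rw [← intervalIntegral.integral_neg]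
        refine intervalIntegral.integral_congr_ae (Eventually.of_forall fun s hs => ?_)
        rw [uIoc_of_le hyb] at hs
        rw [hw s hs, intervalIntegral.integral_const_mul, mul_neg]
    _ = -∫ t in y..b, (∫ u in y..t, (u - y) ^ (σ - 1)) * w' t := by
        rw [integral_integral_triangle_swap hyb (by fun_prop)
          (fun u _ hu _ => rpow_nonneg (sub_nonneg.2 hu.le) _)
          (fun t _ => intervalIntegrable_rpow_comp_sub_right hσ y t)
          (fun _ ht => integral_rpow_comp_sub_right_le hσ ht) hw']
    _ = -∫ t in y..b, (t - y) ^ σ / σ * w' t := by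
        simp_rw [integral_rpow_comp_sub_right hσ]

lemma integral_integral_rpow_mul (hσ : 0 < σ) (hyb : y ≤ b) (hw' : IntegrableOn w' (Ioc y b)) :
    ∫ u in y..b, ∫ t in u..b, (t - u) ^ (σ - 1) * w' t
      = ∫ t in y..b, (t - y) ^ σ / σ * w' t := by
  rw [integral_integral_triangle_swap hyb (by fun_prop)
    (fun u t _ hut => rpow_nonneg (sub_nonneg.2 hut.le) _)
    (fun t _ => intervalIntegrable_rpow_comp_sub_left hσ y t)
    (fun _ ht => integral_rpow_comp_sub_left_le hσ ht) hw']
  simp_rw [integral_rpow_comp_sub_left hσ]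

end RiemannLiouvilleKernel

section RightFractionalIntegral

variable {σ y b : ℝ} {w w' : ℝ → ℝ}

lemma Ir_eq_neg_integral_Ir (hσ : 0 < σ) (hyb : y ≤ b) (hw' : IntegrableOn w' (Ioc y b))
    (hw : ∀ s ∈ Ioc y b, w s = -∫ t in s..b, w' t) :
    Ir b σ w y = -∫ u in y..b, Ir b σ w' u := by
  simp only [Ir]
  rw [intervalIntegral.integral_const_mul, integral_rpow_mul_eq_neg_integral hσ hyb hw' hw,
    integral_integral_rpow_mul hσ hyb hw', mul_neg]

lemma intervalIntegrable_Ir (hσ : 0 < σ) (hyb : y ≤ b) (hw' : IntegrableOn w' (Ioc y b)) :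
    IntervalIntegrable (Ir b σ w') volume y b :=
  (intervalIntegrable_integral_triangle hyb (by fun_prop)
    (fun u t _ hut => rpow_nonneg (sub_nonneg.2 hut.le) _)
    (fun t _ => intervalIntegrable_rpow_comp_sub_left hσ y t)
    (fun _ ht => integral_rpow_comp_sub_left_le hσ ht) hw').const_mul _

end RightFractionalIntegral

theorem deriv_comm_right_fractional_integral_general (a b σ : ℝ) (hab : a < b)
    (hσ0 : 0 < σ) (w w' : ℝ → ℝ)
    (hw' : IntegrableOn w' (Ioo a b))
    (hAC : ∀ x ∈ Icc a b, w x = w a + ∫ s in a..x, w' s)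
    (hwb : w b = 0) :
    ∀ᵐ x ∂(volume.restrict (Ioo a b)),
      HasDerivAt (fun y => Ir b σ w y) (Ir b σ w' x) x := by
  have hw'ab : IntervalIntegrable w' volume a b :=
    (intervalIntegrable_iff_integrableOn_Ioo_of_le hab.le).2 hw'
  have hrep : ∀ y ∈ Ioo a b, Ir b σ w y = ∫ u in b..y, Ir b σ w' u := fun y hy => by
    rw [intervalIntegral.integral_symm,
      Ir_eq_neg_integral_Ir hσ0 hy.2.le (hw'ab.1.mono_set (Ioc_subset_Ioc_left hy.1.le))
        fun s hs => eq_neg_integral_of_eq_add_integral hw'ab hAC hwb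
          ⟨hy.1.le.trans hs.1.le, hs.2⟩]
  have hderiv := (intervalIntegrable_Ir hσ0 hab.le hw'ab.1).ae_hasDerivAt_integral
  filter_upwards [ae_restrict_of_ae hderiv, ae_restrict_mem measurableSet_Ioo] with x hx hxab
  refine (hx (mem_uIcc_of_le hxab.1.le hxab.2.le) b right_mem_uIcc).congr_of_eventuallyEq ?_
  filter_upwards [isOpen_Ioo.mem_nhds hxab] with y hy using hrep y hy

/-- If `w` is absolutely continuous on `[a,b]` with derivative `w' ∈ L¹(a,b)` and
`w(b) = 0`, then differentiation commutes with the right fractional integral: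
`D (I_{b-}^σ w) = I_{b-}^σ w'` a.e. on `(a,b)`. -/
theorem deriv_comm_right_fractional_integral (a b σ : ℝ) (hab : a < b)
    (hσ0 : 0 < σ) (hσ1 : σ < 1) (w w' : ℝ → ℝ)
    (hw' : IntegrableOn w' (Ioo a b))
    (hAC : ∀ x ∈ Icc a b, w x = w a + ∫ s in a..x, w' s)
    (hwb : w b = 0) :
    ∀ᵐ x ∂(volume.restrict (Ioo a b)),
      HasDerivAt (fun y => Ir b σ w y) (Ir b σ w' x) x :=
  deriv_comm_right_fractional_integral_general a b σ hab hσ0 w w' hw' hAC hwb
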